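/- Let q be an odd prime power and let g be an element of order (q+1)/2 in PSL(2,q) ⊆ PGL(2,q). Then θ(g) is a square in F_q, and θ(g) − 4 is not a square in F_q. -/

import Mathlib

open Matrix

/-- `θ(M) = (tr M)² / det M` for an invertible 2×2 matrix `M`. -/
noncomputable def theta {F : Type*} [Field F] (M : GL (Fin 2) F) : F :=
  (Matrix.trace (M : Matrix (Fin 2) (Fin 2) F)) ^ 2 / (M : Matrix (Fin 2) (Fin 2) F).det

/-- `PGL(2, F)`, the quotient of `GL(2, F)` by its centre (the nonzero scalar matrices). -/
abbrev PGL2 (F : Type*) [Field F] := GL (Fin 2) F ⧸ Subgroup.center (GL (Fin 2) F)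

/-- The conjugacy invariant `θ` on `PGL(2, F)` induced by `M ↦ (tr M)²/det M`
(well defined since `θ` is invariant under scalar multiplication). -/
noncomputable def thetaPGL {F : Type*} [Field F] (g : PGL2 F) : F :=
  theta (Quotient.out g)

/-- `PSL(2, F)` viewed as a subgroup of `PGL(2, F)`: the image of `SL(2, F)`. -/
def PSLsub (F : Type*) [Field F] : Subgroup (PGL2 F) :=
  ((QuotientGroup.mk' (Subgroup.center (GL (Fin 2) F))).comp
    Matrix.SpecialLinearGroup.toGL).range


/-!
Lift `g` to `S ∈ SL(2, q)` with trace `t`, so `θ(g) = t²`. If `t² - 4` were a square, the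
characteristic polynomial `X² - tX + 1` of `S` would split as `(X - l)(X - l⁻¹)` over `F_q`.
For `l = l⁻¹` it is `(X - l)²`, which divides `(X - l)ᵖ = Xᵖ - lᵖ`, so `Sᵖ` is scalar; for
`l ≠ l⁻¹` both roots satisfy `x^((q-1)/2) = ±1` with the same sign, so `S^((q-1)/2)` is scalar.
Either way the order of `g` divides `p` or `(q-1)/2`, and neither is divisible by `(q+1)/2`.
-/

open Polynomial

namespace Matrix

section CommRing

variable {n R : Type*} [Fintype n] [DecidableEq n] [CommRing R]

theorem pow_eq_scalar_of_charpoly_dvd {A : Matrix n n R} {k : ℕ} {c : R}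
    (h : A.charpoly ∣ X ^ k - C c) : A ^ k = scalar n c := by
  obtain ⟨Q, hQ⟩ := h
  have := congrArg (aeval A) hQ
  rwa [map_mul, aeval_self_charpoly, zero_mul, map_sub, aeval_X_pow, aeval_C,
    sub_eq_zero] at this

theorem pow_char_eq_scalar_of_charpoly_eq {p : ℕ} [Fact p.Prime] [CharP R p] {A : Matrix n n R}
    {a : R} (hn : Fintype.card n ≤ p) (h : A.charpoly = (X - C a) ^ Fintype.card n) :
    A ^ p = scalar n (a ^ p) := by
  apply pow_eq_scalar_of_charpoly_dvd
  rw [h, C_pow, ← sub_pow_char]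
  exact pow_dvd_pow _ hn

theorem GeneralLinearGroup.mk_pow_eq_one_of_val_pow_eq_scalar {M : GL n R} {k : ℕ} {c : R}
    (h : (M : Matrix n n R) ^ k = Matrix.scalar n c) :
    (M : GL n R ⧸ Subgroup.center (GL n R)) ^ k = 1 := by
  rw [← QuotientGroup.mk_pow, QuotientGroup.eq_one_iff, mem_center_iff_val_mem_range_scalar,
    Units.val_pow_eq_pow_val, h]
  exact ⟨c, rfl⟩

end CommRing

section Field

variable {n K : Type*} [Fintype n] [DecidableEq n] [Field K]

theorem pow_eq_scalar_of_charpoly_eq_mul {A : Matrix n n K} {a b : K} {k : ℕ}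
    (hab : a ≠ b) (h : A.charpoly = (X - C a) * (X - C b)) (hk : a ^ k = b ^ k) :
    A ^ k = scalar n (a ^ k) := by
  apply pow_eq_scalar_of_charpoly_dvd
  rw [h]
  refine (isCoprime_X_sub_C_of_isUnit_sub (sub_ne_zero.2 hab).isUnit).mul_dvd ?_ ?_ <;>
    simp [dvd_iff_isRoot, hk]

theorem charpoly_eq_of_det_eq_one {A : Matrix (Fin 2) (Fin 2) K} {l : K} (hdet : A.det = 1)
    (hl : l ≠ 0) (htr : A.trace = l + l⁻¹) : A.charpoly = (X - C l) * (X - C l⁻¹) := by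
  rw [charpoly_fin_two, hdet, htr, ← mul_inv_cancel₀ hl, C_add, C_mul]
  ring

end Field

end Matrix

section Theta

variable {K : Type*} [Field K]

theorem theta_mul_of_mem_center (M : GL (Fin 2) K) {z : GL (Fin 2) K}
    (hz : z ∈ Subgroup.center (GL (Fin 2) K)) : theta (M * z) = theta M := by
  rw [GeneralLinearGroup.center_eq_range_scalar] at hz
  obtain ⟨c, rfl⟩ := hz
  have hMz : ((M * GeneralLinearGroup.scalar (Fin 2) c : GL (Fin 2) K) : Matrix (Fin 2) (Fin 2) K)
      = (c : K) • (M : Matrix (Fin 2) (Fin 2) K) := by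
    rw [Units.val_mul, GeneralLinearGroup.coe_scalar, ← scalar_commute _ (Commute.all _),
      scalar_apply, ← smul_one_eq_diagonal, smul_mul_assoc, one_mul]
  rw [theta, theta, hMz, trace_smul, det_smul, Fintype.card_fin, smul_eq_mul, mul_pow]
  exact mul_div_mul_left _ _ (pow_ne_zero _ c.ne_zero)

theorem thetaPGL_mk (M : GL (Fin 2) K) : thetaPGL (M : PGL2 K) = theta M := by
  obtain ⟨⟨z, hz⟩, hout⟩ := QuotientGroup.mk_out_eq_mul _ M
  rw [thetaPGL, hout, theta_mul_of_mem_center M hz]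

theorem theta_toGL (S : SpecialLinearGroup (Fin 2) K) :
    theta (SpecialLinearGroup.toGL S) = trace (S : Matrix (Fin 2) (Fin 2) K) ^ 2 := by
  simp [theta]

end Theta

theorem exists_add_inv_eq_of_isSquare_sq_sub_four {K : Type*} [Field K] [NeZero (2 : K)] {t : K}
    (h : IsSquare (t ^ 2 - 4)) : ∃ l ≠ 0, l + l⁻¹ = t := by
  obtain ⟨s, hs⟩ := h
  obtain ⟨l, hl⟩ := exists_quadratic_eq_zero (a := 1) (b := -t) (c := 1) one_ne_zero
    ⟨s, by rw [discrim, ← hs]; ring⟩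
  have hl0 : l ≠ 0 := by rintro rfl; simp at hl
  refine ⟨l, hl0, ?_⟩
  field_simp
  linear_combination hl

namespace FiniteField

variable {K : Type*} [Field K] [Fintype K]

theorem inv_pow_card_div_two (hK : ringChar K ≠ 2) {a : K} (ha : a ≠ 0) :
    a⁻¹ ^ (Fintype.card K / 2) = a ^ (Fintype.card K / 2) := by
  rw [inv_pow]
  rcases pow_dichotomy hK ha with h | h <;> rw [h] <;> norm_num

theorem not_card_add_one_div_two_dvd_ringChar (hodd : Fintype.card K % 2 = 1) :
    ¬ (Fintype.card K + 1) / 2 ∣ ringChar K := by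
  intro h
  have hp := CharP.char_is_prime K (ringChar K)
  have hpq : ringChar K ∣ Fintype.card K :=
    (CharP.cast_eq_zero_iff K _ _).1 (cast_card_eq_zero K)
  rcases hp.eq_one_or_self_of_dvd _ h with h1 | h1
  · have : 1 < Fintype.card K := Fintype.one_lt_card
    omega
  · have hpq1 : ringChar K ∣ Fintype.card K + 1 := ⟨2, by omega⟩
    exact hp.ne_one (Nat.dvd_one.1 ((Nat.dvd_add_right hpq).1 hpq1))

theorem orderOf_mk_toGL_dvd_of_isSquare (hK : ringChar K ≠ 2) (S : SpecialLinearGroup (Fin 2) K)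
    (h : IsSquare (trace (S : Matrix (Fin 2) (Fin 2) K) ^ 2 - 4)) :
    orderOf (SpecialLinearGroup.toGL S : PGL2 K) ∣ ringChar K ∨
      orderOf (SpecialLinearGroup.toGL S : PGL2 K) ∣ Fintype.card K / 2 := by
  have : NeZero (2 : K) := ⟨Ring.two_ne_zero hK⟩
  obtain ⟨l, hl, htr⟩ := exists_add_inv_eq_of_isSquare_sq_sub_four h
  have hchar := charpoly_eq_of_det_eq_one S.prop hl htr.symm
  rcases eq_or_ne l l⁻¹ with hll | hll
  · have : Fact (ringChar K).Prime := ⟨CharP.char_is_prime K _⟩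
    left
    exact orderOf_dvd_of_pow_eq_one (GeneralLinearGroup.mk_pow_eq_one_of_val_pow_eq_scalar
      (pow_char_eq_scalar_of_charpoly_eq (by simpa using (Fact.out : (ringChar K).Prime).two_le)
        (hchar.trans (by rw [← hll, Fintype.card_fin, sq]))))
  · right
    exact orderOf_dvd_of_pow_eq_one (GeneralLinearGroup.mk_pow_eq_one_of_val_pow_eq_scalar
      (pow_eq_scalar_of_charpoly_eq_mul hll hchar (inv_pow_card_div_two hK hl).symm))

end FiniteField

theorem theta_of_order_half_q_add_one (F : Type*) [Field F] [Fintype F]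
    (hodd : Odd (Fintype.card F))
    (g : PGL2 F) (hmem : g ∈ PSLsub F)
    (hg : orderOf g = (Fintype.card F + 1) / 2) :
    IsSquare (thetaPGL g) ∧ ¬ IsSquare (thetaPGL g - 4) := by
  obtain ⟨S, rfl⟩ := hmem
  rw [Nat.odd_iff] at hodd
  have hF : ringChar F ≠ 2 := fun h => by
    have := FiniteField.even_card_of_char_two h
    omega
  simp only [MonoidHom.comp_apply, QuotientGroup.mk'_apply, thetaPGL_mk, theta_toGL] at hg ⊢
  refine ⟨IsSquare.sq _, fun hsq => ?_⟩
  rcases FiniteField.orderOf_mk_toGL_dvd_of_isSquare hF S hsq with h | h <;> rw [hg] at h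
  · exact FiniteField.not_card_add_one_div_two_dvd_ringChar hodd h
  · have : 1 < Fintype.card F := Fintype.one_lt_card
    have := Nat.le_of_dvd (by omega) h
    omega
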